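/- arXiv:2404.12998 — 2 statements merged into one kernel-verified Lean document; each statement's English description precedes it below -/
import Mathlib

section
/- Let L be an n-dimensional nilpotent Lie algebra of coclass 3 (i.e., of nilpotency class n − 3) over a field 𝔽 of characteristic different from 2. If either (i) n ≤ 4, or (ii) n = 5 and dim Z(L) ≠ 1, then for any two commuting automorphisms α and β of L, the composite β ∘ α is a commuting automorphism; hence 𝒜(L) forms a subgroup of Aut(L). -/
/-!
Let `Z` be the center of `L` and `f` a linear map with `⁅f x, x⁆ = 0`, so that
`⁅f x, y⁆ = ⁅x, f y⁆`. If the centralizer of `x` is `F x + Z`, then `f x ≡ c x` modulo `Z` for a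
scalar `c`, and the scalars of two non-commuting such elements agree. If `L` has an abelian
subspace `H` of codimension one, every `y ∉ H` has centralizer `F y + Z`, which forces
`f ≡ c • id` modulo `Z`. When `dim L - dim Z ≤ 3`, either every non-central element has
centralizer `F x + Z`, or a commuting pair `x, y`, independent modulo `Z`, spans such an `H`
together with `Z`.

For a commuting `α` this gives `⁅α x, y⁆ = c ⁅x, y⁆`, whence
`⁅β (α x), x⁆ = ⁅α x, β x⁆ = c ⁅x, β x⁆ = 0`. A nonzero nilpotent Lie algebra has a nonzero
center, so `dim L - dim Z ≤ 3` holds if `dim L ≤ 4`, or if `dim L = 5` and `dim Z ≠ 1`.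
-/

open Module Submodule LieAlgebra

section

variable {F L : Type*} [Field F] [LieRing L] [LieAlgebra F L]

lemma LieAlgebra.mem_center_iff_forall_lie_eq_zero {z : L} :
    z ∈ center F L ↔ ∀ y : L, ⁅z, y⁆ = 0 := by
  rw [← self_module_ker_eq_center]
  exact LieModule.mem_ker F L L z

lemma lie_eq_smul_lie_of_sub_smul_mem_center {u v : L} {c : F} (h : u - c • v ∈ center F L)
    (y : L) : ⁅u, y⁆ = c • ⁅v, y⁆ := by
  have := mem_center_iff_forall_lie_eq_zero.mp h y
  rwa [sub_lie, smul_lie, sub_eq_zero] at this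

variable (F) in
def IsSelfCentralizingModCenter (x : L) : Prop :=
  ∀ y : L, ⁅x, y⁆ = 0 → ∃ a : F, y - a • x ∈ center F L

section CommutingMap

variable {f : L →ₗ[F] L} (hf : ∀ x : L, ⁅f x, x⁆ = 0)
include hf

lemma lie_apply_eq_lie_apply_of_commuting (x y : L) : ⁅f x, y⁆ = ⁅x, f y⁆ := by
  have h := hf (x + y)
  rw [map_add, add_lie, lie_add, lie_add, hf x, hf y, zero_add, add_zero] at h
  rw [eq_neg_of_add_eq_zero_left h, lie_skew]

lemma apply_mem_center_of_commuting {z : L} (hz : z ∈ center F L) : f z ∈ center F L := by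
  refine mem_center_iff_forall_lie_eq_zero.mpr fun y => ?_
  rw [lie_apply_eq_lie_apply_of_commuting hf]
  exact mem_center_iff_forall_lie_eq_zero.mp hz _

lemma exists_apply_sub_smul_mem_center_of_commuting {x : L}
    (hx : IsSelfCentralizingModCenter F x) : ∃ c : F, f x - c • x ∈ center F L :=
  hx (f x) (by rw [← lie_skew, hf, neg_zero])

lemma eq_of_apply_sub_smul_mem_center_of_commuting {x y : L} {c d : F}
    (hx : f x - c • x ∈ center F L) (hy : f y - d • y ∈ center F L) (hxy : ⁅x, y⁆ ≠ 0) :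
    c = d := by
  have h : c • ⁅x, y⁆ = d • ⁅x, y⁆ := by
    rw [← lie_eq_smul_lie_of_sub_smul_mem_center hx, lie_apply_eq_lie_apply_of_commuting hf,
      ← lie_skew, lie_eq_smul_lie_of_sub_smul_mem_center hy, ← smul_neg, lie_skew]
  exact sub_eq_zero.mp ((smul_eq_zero.mp (by rw [sub_smul, h, sub_self])).resolve_right hxy)

/-- The scalar is read off one self-centralizing `x₀ ∉ H`; it propagates to the other elements
outside `H` through `x₀`, and to `H` itself because `h = (h + x₀) - x₀`. -/
theorem exists_forall_apply_sub_smul_mem_center_of_forall_notMem (H : Submodule F L) {x₀ : L}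
    (hx₀ : x₀ ∉ H) (hH : ∀ y ∉ H, IsSelfCentralizingModCenter F y) :
    ∃ c : F, ∀ y : L, f y - c • y ∈ center F L := by
  obtain ⟨c, hc⟩ := exists_apply_sub_smul_mem_center_of_commuting hf (hH x₀ hx₀)
  let S : Submodule F L := (center F L).toSubmodule.comap (f - c • LinearMap.id)
  have hS : ∀ y, y ∈ S ↔ f y - c • y ∈ center F L := fun y => Iff.rfl
  have hcenter : ∀ z ∈ center F L, z ∈ S := fun z hz =>
    (hS z).mpr (sub_mem (apply_mem_center_of_commuting hf hz) (smul_mem _ c hz))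
  have hout : ∀ y ∉ H, y ∈ S := by
    intro y hy
    by_cases hxy : ⁅x₀, y⁆ = 0
    · obtain ⟨a, ha⟩ := hH x₀ hx₀ y hxy
      simpa using S.add_mem (hcenter _ ha) (S.smul_mem a ((hS x₀).mpr hc))
    · obtain ⟨d, hd⟩ := exists_apply_sub_smul_mem_center_of_commuting hf (hH y hy)
      rwa [hS, eq_of_apply_sub_smul_mem_center_of_commuting hf hc hd hxy]
  refine ⟨c, fun y => (hS y).mp ?_⟩
  by_cases hy : y ∈ H
  · have hyx : y + x₀ ∉ H := fun h => hx₀ (by simpa using H.sub_mem h hy)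
    simpa using S.sub_mem (hout _ hyx) (hout _ hx₀)
  · exact hout y hy

end CommutingMap

theorem isSelfCentralizingModCenter_of_notMem [FiniteDimensional F L] {H : Submodule F L}
    (hH : ∀ x ∈ H, ∀ y ∈ H, ⁅x, y⁆ = 0) (hcodim : finrank F (L ⧸ H) = 1) {y : L} (hy : y ∉ H) :
    IsSelfCentralizingModCenter F y := by
  have htop : ∀ w : L, ∃ h ∈ H, ∃ a : F, h + a • y = w := fun w => by
    have hw : w ∈ H ⊔ F ∙ y := by
      rw [(sup_span_singleton_eq_top_iff hy).mpr hcodim]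
      exact mem_top
    simpa [mem_sup, mem_span_singleton] using hw
  intro z hz
  obtain ⟨h, hh, a, rfl⟩ := htop z
  refine ⟨a, mem_center_iff_forall_lie_eq_zero.mpr fun w => ?_⟩
  obtain ⟨h', hh', b, rfl⟩ := htop w
  have hhy : ⁅h, y⁆ = 0 := by
    rw [lie_add, lie_smul, lie_self, smul_zero, add_zero] at hz
    rw [← lie_skew, hz, neg_zero]
  rw [add_sub_cancel_right, lie_add, lie_smul, hhy, smul_zero, add_zero, hH h hh h' hh']

theorem exists_forall_apply_sub_smul_mem_center_of_abelian_of_finrank_quotient_eq_one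
    [FiniteDimensional F L] {H : Submodule F L} (hH : ∀ x ∈ H, ∀ y ∈ H, ⁅x, y⁆ = 0)
    (hcodim : finrank F (L ⧸ H) = 1) {f : L →ₗ[F] L} (hf : ∀ x : L, ⁅f x, x⁆ = 0) :
    ∃ c : F, ∀ y : L, f y - c • y ∈ center F L := by
  obtain ⟨x₀, hx₀⟩ : ∃ x₀, x₀ ∉ H := by
    by_contra! h
    rw [show H = ⊤ from eq_top_iff.mpr fun x _ => h x, finrank_zero_of_subsingleton] at hcodim
    exact zero_ne_one hcodim
  exact exists_forall_apply_sub_smul_mem_center_of_forall_notMem hf H hx₀ fun y hy =>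
    isSelfCentralizingModCenter_of_notMem hH hcodim hy

theorem exists_abelian_finrank_quotient_eq_one [FiniteDimensional F L]
    (hdim : finrank F L ≤ finrank F (center F L) + 3) {x : L} (hx : x ∉ center F L)
    (hnx : ¬ IsSelfCentralizingModCenter F x) :
    ∃ H : Submodule F L, (∀ u ∈ H, ∀ v ∈ H, ⁅u, v⁆ = 0) ∧ finrank F (L ⧸ H) = 1 := by
  simp only [IsSelfCentralizingModCenter, not_forall, not_exists] at hnx
  obtain ⟨y, hxy, hy⟩ := hnx
  set Z : Submodule F L := (center F L).toSubmodule
  have hyx : ⁅y, x⁆ = 0 := by rw [← lie_skew, hxy, neg_zero]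
  have hH : ∀ u ∈ Z ⊔ F ∙ x ⊔ F ∙ y, ∀ v ∈ Z ⊔ F ∙ x ⊔ F ∙ y, ⁅u, v⁆ = 0 := by
    simp only [mem_sup, mem_span_singleton]
    rintro _ ⟨_, ⟨z, hz, _, ⟨s, rfl⟩, rfl⟩, _, ⟨t, rfl⟩, rfl⟩
      _ ⟨_, ⟨z', hz', _, ⟨s', rfl⟩, rfl⟩, _, ⟨t', rfl⟩, rfl⟩
    have hz₁ := mem_center_iff_forall_lie_eq_zero.mp hz
    have hz₂ := (LieModule.mem_maxTrivSubmodule F L L z').mp hz'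
    simp [hz₁, hz₂, hxy, hyx]
  refine ⟨_, hH, ?_⟩
  have hyZx : y ∉ Z ⊔ F ∙ x := by
    simp only [mem_sup, mem_span_singleton]
    rintro ⟨z, hz, _, ⟨a, rfl⟩, rfl⟩
    exact hy a (by rwa [add_sub_cancel_right])
  have hHtop : Z ⊔ F ∙ x ⊔ F ∙ y ≠ ⊤ := fun htop => hx <| mem_center_iff_forall_lie_eq_zero.mpr
    fun w => hH x (mem_sup_left (mem_sup_right (mem_span_singleton_self x))) w (htop ▸ mem_top)
  have hrank : finrank F ↥(Z ⊔ F ∙ x ⊔ F ∙ y) = finrank F (center F L) + 2 := by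
    rw [finrank_sup_span_singleton hyZx, finrank_sup_span_singleton hx]
    rfl
  have := finrank_quotient_add_finrank (Z ⊔ F ∙ x ⊔ F ∙ y)
  have := finrank_lt hHtop
  omega

theorem exists_forall_apply_sub_smul_mem_center_of_finrank_le [FiniteDimensional F L]
    (hdim : finrank F L ≤ finrank F (center F L) + 3) {f : L →ₗ[F] L}
    (hf : ∀ x : L, ⁅f x, x⁆ = 0) : ∃ c : F, ∀ y : L, f y - c • y ∈ center F L := by
  by_cases habel : ∀ x : L, x ∈ center F L
  · exact ⟨0, fun y => by simpa using habel (f y)⟩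
  push Not at habel
  obtain ⟨x₀, hx₀⟩ := habel
  by_cases hreg : ∀ x ∉ center F L, IsSelfCentralizingModCenter F x
  · exact exists_forall_apply_sub_smul_mem_center_of_forall_notMem hf _ hx₀ hreg
  push Not at hreg
  obtain ⟨x, hx, hnx⟩ := hreg
  obtain ⟨H, hH, hcodim⟩ := exists_abelian_finrank_quotient_eq_one hdim hx hnx
  exact exists_forall_apply_sub_smul_mem_center_of_abelian_of_finrank_quotient_eq_one hH hcodim hf

lemma lie_apply_apply_self_eq_zero {f g : L →ₗ[F] L} {c : F}
    (hf : ∀ x : L, f x - c • x ∈ center F L) (hg : ∀ x : L, ⁅g x, x⁆ = 0) (x : L) :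
    ⁅g (f x), x⁆ = 0 := by
  rw [lie_apply_eq_lie_apply_of_commuting hg, lie_eq_smul_lie_of_sub_smul_mem_center (hf x),
    ← lie_skew, hg, neg_zero, smul_zero]

end

theorem comp_commuting_of_coclass_three_small_dim_general {F L : Type*} [Field F] [LieRing L]
    [LieAlgebra F L] [FiniteDimensional F L]
    (n : ℕ) (hn : Module.finrank F L = n)
    (hclass : LieModule.lowerCentralSeries F L L (n - 3) = ⊥)
    (hsmall : n ≤ 4 ∨ (n = 5 ∧ Module.finrank F ↥(LieAlgebra.center F L) ≠ 1))
    (α β : L ≃ₗ⁅F⁆ L) (hα : ∀ x : L, ⁅α x, x⁆ = 0) (hβ : ∀ x : L, ⁅β x, x⁆ = 0) :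
    ∀ x : L, ⁅β (α x), x⁆ = 0 := by
  have : LieRing.IsNilpotent L := LieModule.IsNilpotent.mk L hclass
  have hdim : finrank F L ≤ finrank F (center F L) + 3 := by
    rcases subsingleton_or_nontrivial L with hL | hL
    · rw [finrank_zero_of_subsingleton]
      omega
    · have := non_trivial_center_of_isNilpotent (R := F) (L := L)
      have := finrank_pos (R := F) (M := center F L)
      omega
  obtain ⟨c, hc⟩ := exists_forall_apply_sub_smul_mem_center_of_finrank_le hdim
    (f := α.toLinearEquiv.toLinearMap) hα
  exact lie_apply_apply_self_eq_zero hc (g := β.toLinearEquiv.toLinearMap) hβ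

/-- Let `L` be an `n`-dimensional nilpotent Lie algebra of coclass `3` (i.e. of nilpotency class
`n − 3`) over a field `𝔽` of characteristic different from `2`. If either `n ≤ 4`, or `n = 5` and
`dim Z(L) ≠ 1`, then the composite of any two commuting automorphisms of `L` is again a commuting
automorphism; hence `𝒜(L)` forms a subgroup of `Aut(L)`. -/
theorem comp_commuting_of_coclass_three_small_dim {F L : Type*} [Field F] [LieRing L]
    [LieAlgebra F L] [FiniteDimensional F L] (hchar : ringChar F ≠ 2)
    (n : ℕ) (hn : Module.finrank F L = n)
    (hclass : LieModule.lowerCentralSeries F L L (n - 3) = ⊥)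
    (hclass' : LieModule.lowerCentralSeries F L L (n - 4) ≠ ⊥)
    (hsmall : n ≤ 4 ∨ (n = 5 ∧ Module.finrank F ↥(LieAlgebra.center F L) ≠ 1))
    (α β : L ≃ₗ⁅F⁆ L) (hα : ∀ x : L, ⁅α x, x⁆ = 0) (hβ : ∀ x : L, ⁅β x, x⁆ = 0) :
    ∀ x : L, ⁅β (α x), x⁆ = 0 :=
  comp_commuting_of_coclass_three_small_dim_general n hn hclass hsmall α β hα hβ
end

section
/- Let L be an n-dimensional nilpotent Lie algebra of coclass 3 (i.e., of nilpotency class n − 3) over a field 𝔽 of characteristic different from 2, with n ≥ 6. If the second center Z₂(L), regarded as a Lie algebra, has nilpotency class equal to 2, then either Z₂(L) is abelian, or dim Z(L) = 1, dim Z₂(L) = 4 and dim L' = n − 4. -/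
/-!
Write `c = n - 3` for the nilpotency class and suppose `a, b ∈ Z₂(L)` do not commute. Since
`Z₂(L)` centralizes `L'`, the elements `a`, `b` and any `w ∈ L^(c-2)` outside `Z(L)` are linearly
independent modulo `Z(L)`, so `dim Z₂ ≥ dim Z + 3`. The upper central series grows strictly for
`c - 3` more steps up to `Z_(c-1)(L)`, which has codimension at least `2`, because an ideal whose
normalizer has codimension at most `1` has normalizer `L`. Hence
`dim Z + 3 + (c - 3) + 2 ≤ n = c + 3`, forcing `dim Z = 1` and `dim Z₂ = 4`. Likewise
`L' + ⟨a, b⟩` has dimension `dim L' + 2` and codimension at least `2` (otherwise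
`L' ⊆ L² + Z(L)` and the lower central series would stall), while `dim L' ≥ c - 1`; so
`dim L' = n - 4`.
-/

/-- The second center `Z₂(L) = {x ∈ L : ⁅x, y⁆ ∈ Z(L) for all y ∈ L}` of a Lie algebra `L`,
as a Lie subalgebra of `L`. -/
def secondCenter (F L : Type*) [Field F] [LieRing L] [LieAlgebra F L] : LieSubalgebra F L where
  carrier := {x : L | ∀ y : L, ⁅x, y⁆ ∈ LieAlgebra.center F L}
  add_mem' := fun {a b} ha hb y => by
    rw [add_lie]; exact add_mem (ha y) (hb y)
  zero_mem' := fun y => by rw [zero_lie]; exact zero_mem _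
  smul_mem' := fun c {x} hx y => by
    rw [smul_lie]; exact Submodule.smul_mem _ c (hx y)
  lie_mem' := fun {a b} ha hb y => by
    have h1 : ⁅a, ⁅b, y⁆⁆ = 0 := (LieModule.mem_maxTrivSubmodule F L L ⁅b, y⁆).mp (hb y) a
    have h2 : ⁅b, ⁅a, y⁆⁆ = 0 := (LieModule.mem_maxTrivSubmodule F L L ⁅a, y⁆).mp (ha y) b
    have h3 : ⁅⁅a, b⁆, y⁆ = 0 := by rw [lie_lie, h1, h2, sub_zero]
    rw [h3]; exact zero_mem _

open LieModule Module Submodule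

namespace Submodule

variable {K V : Type*} [DivisionRing K] [AddCommGroup V] [Module K V] [FiniteDimensional K V]

lemma finrank_add_two_le_of_forall_sup_span_ne_top {W : Submodule K V}
    (h : ∀ x : V, W ⊔ span K {x} ≠ ⊤) : finrank K W + 2 ≤ finrank K V := by
  obtain ⟨x, hx⟩ : ∃ x, x ∉ W := by
    by_contra! hW
    exact h 0 (by rw [eq_top_iff'.mpr hW, top_sup_eq])
  have := finrank_lt (h x)
  rw [finrank_sup_span_singleton hx] at this
  omega

end Submodule

namespace LieModule

section CommRing

variable {R L M : Type*} [CommRing R] [LieRing L] [LieAlgebra R L] [AddCommGroup M] [Module R M]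
  [LieRingModule L M] [LieModule R L M] [IsNilpotent L M]

lemma lowerCentralSeries_eq_bot_of_succ_eq {k : ℕ}
    (h : lowerCentralSeries R L M (k + 1) = lowerCentralSeries R L M k) :
    lowerCentralSeries R L M k = ⊥ := by
  have hconst : ∀ j, lowerCentralSeries R L M (k + j) = lowerCentralSeries R L M k := by
    intro j
    induction j with
    | zero => rfl
    | succ j ih => rw [← add_assoc, lowerCentralSeries_succ, ih, ← lowerCentralSeries_succ, h]
  obtain ⟨m, hm⟩ := IsNilpotent.nilpotent R L M
  rw [← hconst m, eq_bot_iff, ← hm]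
  exact antitone_lowerCentralSeries R L M (Nat.le_add_left m k)

lemma lowerCentralSeries_succ_lt {k : ℕ} (h : lowerCentralSeries R L M (k + 1) ≠ ⊥) :
    lowerCentralSeries R L M (k + 1) < lowerCentralSeries R L M k :=
  lt_of_le_of_ne (antitone_lowerCentralSeries R L M k.le_succ)
    fun he => h (he.trans (lowerCentralSeries_eq_bot_of_succ_eq he))

lemma lowerCentralSeries_eq_bot_of_le_succ_sup_maxTrivSubmodule {k : ℕ}
    (h : lowerCentralSeries R L M k ≤ lowerCentralSeries R L M (k + 1) ⊔ maxTrivSubmodule R L M) :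
    lowerCentralSeries R L M (k + 1) = ⊥ := by
  have htriv : ⁅(⊤ : LieIdeal R L), maxTrivSubmodule R L M⁆ = ⊥ :=
    (LieSubmodule.lie_eq_bot_iff _ _).mpr fun x _ m hm => (mem_maxTrivSubmodule R L M m).mp hm x
  have hle : lowerCentralSeries R L M (k + 1) ≤ lowerCentralSeries R L M (k + 1 + 1) := by
    rw [lowerCentralSeries_succ, lowerCentralSeries_succ R L M (k + 1)]
    calc ⁅(⊤ : LieIdeal R L), lowerCentralSeries R L M k⁆
        ≤ ⁅⊤, lowerCentralSeries R L M (k + 1) ⊔ maxTrivSubmodule R L M⁆ :=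
          LieSubmodule.mono_lie_right _ h
      _ = ⁅⊤, lowerCentralSeries R L M (k + 1)⁆ := by
          rw [LieSubmodule.lie_sup, htriv, sup_bot_eq]
  exact lowerCentralSeries_eq_bot_of_succ_eq
    (le_antisymm (antitone_lowerCentralSeries R L M (k + 1).le_succ) hle)

lemma ucs_lt_ucs_succ {k : ℕ} (h : (⊥ : LieSubmodule R L M).ucs k ≠ ⊤) :
    (⊥ : LieSubmodule R L M).ucs k < (⊥ : LieSubmodule R L M).ucs (k + 1) := by
  rw [LieSubmodule.ucs_succ]
  refine lt_of_le_of_ne (LieSubmodule.le_normalizer _) fun he => h ?_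
  obtain ⟨m, hm⟩ := (isNilpotent_iff_exists_ucs_eq_top R).mp ‹IsNilpotent L M›
  rw [eq_top_iff, ← hm]
  exact LieSubmodule.ucs_le_of_normalizer_eq_self he.symm m

end CommRing

section Field

variable {K L M : Type*} [Field K] [LieRing L] [LieAlgebra K L] [AddCommGroup M] [Module K M]
  [LieRingModule L M] [LieModule K L M] [IsNilpotent L M] [FiniteDimensional K M]

lemma finrank_lowerCentralSeries_add_sub_le {k j : ℕ} (hkj : k ≤ j)
    (h : lowerCentralSeries K L M j ≠ ⊥) :
    finrank K (lowerCentralSeries K L M j) + (j - k) ≤ finrank K (lowerCentralSeries K L M k) := by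
  induction j, hkj using Nat.le_induction with
  | base => simp
  | succ j hkj ih =>
    have hlt : finrank K (lowerCentralSeries K L M (j + 1)) <
        finrank K (lowerCentralSeries K L M j) :=
      Submodule.finrank_lt_finrank_of_lt (lowerCentralSeries_succ_lt h)
    have := ih (ne_bot_of_le_ne_bot h (antitone_lowerCentralSeries K L M j.le_succ))
    omega

lemma finrank_ucs_add_sub_le {k j : ℕ} (hkj : k ≤ j) (h : (⊥ : LieSubmodule K L M).ucs j ≠ ⊤) :
    finrank K ((⊥ : LieSubmodule K L M).ucs k) + (j - k) ≤
      finrank K ((⊥ : LieSubmodule K L M).ucs j) := by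
  induction j, hkj using Nat.le_induction with
  | base => simp
  | succ j hkj ih =>
    have hj : (⊥ : LieSubmodule K L M).ucs j ≠ ⊤ := fun he =>
      h (by rw [LieSubmodule.ucs_succ, he]; exact top_le_iff.mp (LieSubmodule.le_normalizer ⊤))
    have hlt : finrank K ((⊥ : LieSubmodule K L M).ucs j) <
        finrank K ((⊥ : LieSubmodule K L M).ucs (j + 1)) :=
      Submodule.finrank_lt_finrank_of_lt (ucs_lt_ucs_succ hj)
    have := ih hj
    omega

end Field

end LieModule

namespace LieSubmodule

variable {K L : Type*} [Field K] [LieRing L] [LieAlgebra K L]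

lemma normalizer_eq_top_of_sup_span_eq_top {N : LieIdeal K L} {x : L}
    (h : N.normalizer.toSubmodule ⊔ span K {x} = ⊤) : N.normalizer = ⊤ := by
  have hx : x ∈ N.normalizer := by
    rw [mem_normalizer]
    intro y
    obtain ⟨m, hm, t, ht, rfl⟩ := Submodule.mem_sup.mp (h ▸ Submodule.mem_top : y ∈ _)
    obtain ⟨s, rfl⟩ := Submodule.mem_span_singleton.mp ht
    rw [add_lie, smul_lie, lie_self, smul_zero, add_zero, ← lie_skew]
    exact neg_mem ((mem_normalizer N m).mp hm x)
  rw [← toSubmodule_inj, top_toSubmodule, ← h, left_eq_sup, span_singleton_le_iff_mem]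
  exact hx

lemma finrank_normalizer_add_two_le [FiniteDimensional K L] {N : LieIdeal K L}
    (h : N.normalizer ≠ ⊤) : finrank K N.normalizer + 2 ≤ finrank K L :=
  Submodule.finrank_add_two_le_of_forall_sup_span_ne_top fun _ hx =>
    h (normalizer_eq_top_of_sup_span_eq_top hx)

end LieSubmodule

section SecondCenter

variable {K L : Type*} [Field K] [LieRing L] [LieAlgebra K L]

lemma mem_secondCenter_iff_mem_ucs_two {x : L} :
    x ∈ secondCenter K L ↔ x ∈ (⊥ : LieIdeal K L).ucs 2 := by
  rw [LieSubmodule.ucs_succ, LieSubmodule.ucs_bot_one, LieSubmodule.mem_normalizer]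
  refine forall_congr' fun y => ?_
  rw [← lie_skew, neg_mem_iff]

lemma finrank_secondCenter_eq_finrank_ucs_two :
    finrank K (secondCenter K L) = finrank K ((⊥ : LieIdeal K L).ucs 2) := by
  have h : (secondCenter K L).toSubmodule = ((⊥ : LieIdeal K L).ucs 2).toSubmodule :=
    Submodule.ext fun _ => mem_secondCenter_iff_mem_ucs_two
  exact congrArg (fun S : Submodule K L => finrank K S) h

lemma lowerCentralSeries_one_le_ker_ad {x : L} (hx : x ∈ secondCenter K L) :
    (lowerCentralSeries K L L 1).toSubmodule ≤ LinearMap.ker (LieAlgebra.ad K L x) := by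
  rw [LieModule.lowerCentralSeries_succ, lowerCentralSeries_zero,
    LieSubmodule.lieIdeal_oper_eq_linear_span', span_le]
  rintro _ ⟨y, -, m, -, rfl⟩
  have hy : ⁅m, ⁅x, y⁆⁆ = 0 := (mem_maxTrivSubmodule K L L _).mp (hx y) m
  have hm : ⁅y, ⁅x, m⁆⁆ = 0 := (mem_maxTrivSubmodule K L L _).mp (hx m) y
  rw [SetLike.mem_coe, LinearMap.mem_ker, LieAlgebra.ad_apply, leibniz_lie, hm, add_zero,
    ← lie_skew, hy, neg_zero]

end SecondCenter

section SecondCenterDimension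

variable {K L : Type*} [Field K] [LieRing L] [LieAlgebra K L] [FiniteDimensional K L]

lemma finrank_sup_span_sup_span_of_lie_ne_zero {W : Submodule K L} {a b : L}
    (hab : ⁅a, b⁆ ≠ 0) (ha : W ≤ LinearMap.ker (LieAlgebra.ad K L a))
    (hb : W ≤ LinearMap.ker (LieAlgebra.ad K L b)) :
    finrank K ↥(W ⊔ span K {a} ⊔ span K {b}) = finrank K W + 2 := by
  have haW : a ∉ W := fun h => hab (by
    have hba : ⁅b, a⁆ = 0 := hb h
    rw [← lie_skew, hba, neg_zero])
  have hbW : b ∉ W ⊔ span K {a} := by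
    intro h
    obtain ⟨w, hw, t, ht, rfl⟩ := mem_sup.mp h
    obtain ⟨s, rfl⟩ := mem_span_singleton.mp ht
    apply hab
    rw [lie_add, lie_smul, lie_self, smul_zero, add_zero, ← LieAlgebra.ad_apply K]
    exact ha hw
  rw [finrank_sup_span_singleton hbW, finrank_sup_span_singleton haW]

lemma finrank_center_add_three_le_finrank_secondCenter {k : ℕ}
    (hk : lowerCentralSeries K L L (k + 3) = ⊥) (hk' : lowerCentralSeries K L L (k + 2) ≠ ⊥)
    {a b : L} (ha : a ∈ secondCenter K L) (hb : b ∈ secondCenter K L) (hab : ⁅a, b⁆ ≠ 0) :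
    finrank K (LieAlgebra.center K L) + 3 ≤ finrank K (secondCenter K L) := by
  obtain ⟨w, hw, hwZ⟩ : ∃ w ∈ lowerCentralSeries K L L (k + 1), w ∉ LieAlgebra.center K L := by
    by_contra! h
    refine hk' (eq_bot_iff.mpr ((LieSubmodule.lcs_add_le_iff (k + 1) 1).mpr ?_))
    rw [LieSubmodule.ucs_bot_one]
    exact h
  have hw₂ : w ∈ secondCenter K L := mem_secondCenter_iff_mem_ucs_two.mpr
    ((LieSubmodule.lcs_add_le_iff (k + 1) 2).mp (le_bot_iff.mpr hk) hw)
  have hw₁ : w ∈ lowerCentralSeries K L L 1 :=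
    antitone_lowerCentralSeries K L L (by omega) hw
  have hcenter : (LieAlgebra.center K L).toSubmodule ≤ (secondCenter K L).toSubmodule :=
    fun z hz y => by
      rw [← lie_skew, (mem_maxTrivSubmodule K L L z).mp hz y, neg_zero]
      exact zero_mem _
  set W := (LieAlgebra.center K L).toSubmodule ⊔ span K {w}
  have hker : ∀ x ∈ secondCenter K L, W ≤ LinearMap.ker (LieAlgebra.ad K L x) := fun x hx =>
    sup_le (fun z hz => (mem_maxTrivSubmodule K L L z).mp hz x)
      ((span_singleton_le_iff_mem _ _).mpr (lowerCentralSeries_one_le_ker_ad hx hw₁))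
  calc finrank K (LieAlgebra.center K L) + 3 = finrank K W + 2 := by
        rw [finrank_sup_span_singleton hwZ]; rfl
    _ = finrank K ↥(W ⊔ span K {a} ⊔ span K {b}) :=
        (finrank_sup_span_sup_span_of_lie_ne_zero hab (hker a ha) (hker b hb)).symm
    _ ≤ finrank K (secondCenter K L) := Submodule.finrank_mono <|
        sup_le (sup_le (sup_le hcenter ((span_singleton_le_iff_mem _ _).mpr hw₂))
          ((span_singleton_le_iff_mem _ _).mpr ha)) ((span_singleton_le_iff_mem _ _).mpr hb)

lemma finrank_lowerCentralSeries_one_add_four_le [IsNilpotent L L]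
    (h₂ : lowerCentralSeries K L L 2 ≠ ⊥) {a b : L} (ha : a ∈ secondCenter K L)
    (hb : b ∈ secondCenter K L) (hab : ⁅a, b⁆ ≠ 0) :
    finrank K (lowerCentralSeries K L L 1) + 4 ≤ finrank K L := by
  set N : LieIdeal K L := lowerCentralSeries K L L 2 ⊔ LieAlgebra.center K L
  have hN : N.normalizer ≠ ⊤ := fun h => h₂ <|
    lowerCentralSeries_eq_bot_of_le_succ_sup_maxTrivSubmodule <|
      (LieSubmodule.top_lie_le_iff_le_normalizer _ _).mpr h.ge
  have hsecond : ∀ x ∈ secondCenter K L, x ∈ N.normalizer := fun x hx => by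
    rw [mem_secondCenter_iff_mem_ucs_two, LieSubmodule.ucs_succ, LieSubmodule.ucs_bot_one] at hx
    exact LieSubmodule.normalizer_mono le_sup_right hx
  have hderived : lowerCentralSeries K L L 1 ≤ N.normalizer :=
    ((LieSubmodule.top_lie_le_iff_le_normalizer _ _).mp le_rfl).trans
      (LieSubmodule.normalizer_mono le_sup_left)
  calc finrank K (lowerCentralSeries K L L 1) + 4
      = finrank K ↥((lowerCentralSeries K L L 1).toSubmodule ⊔ span K {a} ⊔ span K {b}) + 2 := by
        rw [finrank_sup_span_sup_span_of_lie_ne_zero hab (lowerCentralSeries_one_le_ker_ad ha)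
          (lowerCentralSeries_one_le_ker_ad hb)]; rfl
    _ ≤ finrank K N.normalizer + 2 := by
        gcongr
        exact Submodule.finrank_mono (sup_le (sup_le hderived
          ((span_singleton_le_iff_mem _ _).mpr (hsecond a ha)))
          ((span_singleton_le_iff_mem _ _).mpr (hsecond b hb)))
    _ ≤ finrank K L := LieSubmodule.finrank_normalizer_add_two_le hN

end SecondCenterDimension

theorem second_center_structure_of_class_two_general {F L : Type*} [Field F] [LieRing L]
    [LieAlgebra F L] [FiniteDimensional F L]
    (n : ℕ) (hn : Module.finrank F L = n) (hn6 : 6 ≤ n)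
    (hclass : LieModule.lowerCentralSeries F L L (n - 3) = ⊥)
    (hclass' : LieModule.lowerCentralSeries F L L (n - 4) ≠ ⊥) :
    (∀ a ∈ secondCenter F L, ∀ b ∈ secondCenter F L, ⁅a, b⁆ = 0) ∨
      (Module.finrank F ↥(LieAlgebra.center F L) = 1 ∧
        Module.finrank F ↥(secondCenter F L) = 4 ∧
        Module.finrank F ↥(LieModule.lowerCentralSeries F L L 1) = n - 4) := by
  by_cases habelian : ∀ a ∈ secondCenter F L, ∀ b ∈ secondCenter F L, ⁅a, b⁆ = 0
  · exact Or.inl habelian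
  push Not at habelian
  obtain ⟨a, ha, b, hb, hab⟩ := habelian
  obtain ⟨p, rfl⟩ : ∃ p, n = p + 6 := ⟨n - 6, by omega⟩
  rw [show p + 6 - 3 = p + 3 by omega] at hclass
  rw [show p + 6 - 4 = p + 2 by omega] at hclass'
  have : IsNilpotent L L := LieModule.IsNilpotent.mk L hclass
  have hcenter_pos : 0 < finrank F (LieAlgebra.center F L) :=
    finrank_pos_iff_exists_ne_zero.mpr ⟨⟨_, ha b⟩, fun h => hab (congrArg Subtype.val h)⟩
  have hcenter := finrank_center_add_three_le_finrank_secondCenter hclass hclass' ha hb hab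
  have hucs_ne : (⊥ : LieIdeal F L).ucs (p + 2) ≠ ⊤ := fun h =>
    hclass' (le_bot_iff.mp ((LieSubmodule.ucs_eq_top_iff ⊥ _).mp h))
  have hucs := finrank_ucs_add_sub_le (by omega : 2 ≤ p + 2) hucs_ne
  have hucs_top : finrank F ((⊥ : LieIdeal F L).ucs (p + 2)) + 2 ≤ p + 6 := by
    rw [← hn, LieSubmodule.ucs_succ]
    exact LieSubmodule.finrank_normalizer_add_two_le (by rwa [← LieSubmodule.ucs_succ])
  have hlcs := finrank_lowerCentralSeries_add_sub_le (by omega : 1 ≤ p + 2) hclass'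
  have hlcs_pos : 0 < finrank F (lowerCentralSeries F L L (p + 2)) :=
    finrank_pos_iff.mpr ((LieSubmodule.nontrivial_iff_ne_bot F L L).mpr hclass')
  have hderived := finrank_lowerCentralSeries_one_add_four_le
    (ne_bot_of_le_ne_bot hclass' (antitone_lowerCentralSeries F L L (by omega))) ha hb hab
  rw [finrank_secondCenter_eq_finrank_ucs_two] at hcenter ⊢
  exact Or.inr ⟨by omega, by omega, by omega⟩

/-- Let `L` be an `n`-dimensional nilpotent Lie algebra of coclass `3` (i.e. of nilpotency class
`n − 3`) over a field `𝔽` of characteristic different from `2`, with `n ≥ 6`. If the second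
center `Z₂(L)`, regarded as a Lie algebra, has nilpotency class equal to `2`, then either
`Z₂(L)` is abelian, or `dim Z(L) = 1`, `dim Z₂(L) = 4` and `dim L' = n − 4`. -/
theorem second_center_structure_of_class_two {F L : Type*} [Field F] [LieRing L]
    [LieAlgebra F L] [FiniteDimensional F L] (hchar : ringChar F ≠ 2)
    (n : ℕ) (hn : Module.finrank F L = n) (hn6 : 6 ≤ n)
    (hclass : LieModule.lowerCentralSeries F L L (n - 3) = ⊥)
    (hclass' : LieModule.lowerCentralSeries F L L (n - 4) ≠ ⊥)
    (hZ2 : LieModule.lowerCentralSeries F ↥(secondCenter F L) ↥(secondCenter F L) 2 = ⊥ ∧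
        LieModule.lowerCentralSeries F ↥(secondCenter F L) ↥(secondCenter F L) 1 ≠ ⊥) :
    (∀ a ∈ secondCenter F L, ∀ b ∈ secondCenter F L, ⁅a, b⁆ = 0) ∨
      (Module.finrank F ↥(LieAlgebra.center F L) = 1 ∧
        Module.finrank F ↥(secondCenter F L) = 4 ∧
        Module.finrank F ↥(LieModule.lowerCentralSeries F L L 1) = n - 4) :=
  second_center_structure_of_class_two_general n hn hn6 hclass hclass'
end
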